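/- arXiv:2405.20424 — 9 statements merged into one kernel-verified Lean document; each statement's English description precedes it below -/
import Mathlib

section
/- Let n ≥ 2 and let a, b : Fin n → ℝ² be points such that the 2n points a₀,b₀,…,a_{n-1},b_{n-1} are pairwise distinct. Suppose the perfect matching M = {(aᵢ,bᵢ) : i ∈ Fin n} is 2-local maximum, i.e., for all i ≠ j one has dist(aᵢ,bᵢ) + dist(aⱼ,bⱼ) ≥ dist(aᵢ,aⱼ) + dist(bᵢ,bⱼ) and dist(aᵢ,bᵢ) + dist(aⱼ,bⱼ) ≥ dist(aᵢ,bⱼ) + dist(aⱼ,bᵢ). Then for every fixed-point-free involution τ on the set of all 2n endpoints, Σᵢ dist(aᵢ,bᵢ) ≥ √(3/7) · (1/2) · Σ_{x} dist(x, τ(x)). That is, every 2-local Euclidean maximum matching is a √(3/7)-approximation of a global Euclidean maximum matching. -/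
open Finset

noncomputable section

/-- The Euclidean plane. -/
abbrev Pt : Type := EuclideanSpace ℝ (Fin 2)

/-- The set of endpoints of the matching with edges `(a i, b i)`. -/
def endpts {n : ℕ} (a b : Fin n → Pt) : Finset Pt :=
  letI := Classical.decEq Pt
  (Finset.univ.image a) ∪ (Finset.univ.image b)

/-- `σ` is a perfect matching on the finite point set `S`:
a fixed-point-free involution of `S`. -/
def IsFpfInvolOn (S : Finset Pt) (σ : Pt → Pt) : Prop :=
  (∀ x ∈ S, σ x ∈ S) ∧ (∀ x ∈ S, σ (σ x) = x) ∧ (∀ x ∈ S, σ x ≠ x)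

/-- The matching with edges `(a i, b i)` is `k`-local maximum: any `k` of its edges
form a maximum-length perfect matching on their `2k` endpoints. -/
def IsKLocalMax (k : ℕ) {n : ℕ} (a b : Fin n → Pt) : Prop :=
  ∀ s : Fin k → Fin n, Function.Injective s →
    ∀ σ : Pt → Pt, IsFpfInvolOn (endpts (a ∘ s) (b ∘ s)) σ →
      (1/2) * ∑ x ∈ endpts (a ∘ s) (b ∘ s), dist x (σ x) ≤ ∑ j, dist (a (s j)) (b (s j))

theorem two_local_max_approx (n : ℕ) (hn : 2 ≤ n)
    (a b : Fin n → Pt)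
    (hdist : Function.Injective (Sum.elim a b : Fin n ⊕ Fin n → Pt))
    (hlocal : ∀ i j : Fin n, i ≠ j →
      dist (a i) (a j) + dist (b i) (b j) ≤ dist (a i) (b i) + dist (a j) (b j) ∧
      dist (a i) (b j) + dist (a j) (b i) ≤ dist (a i) (b i) + dist (a j) (b j))
    (τ : Pt → Pt) (hτ : IsFpfInvolOn (endpts a b) τ) :
    Real.sqrt (3/7) * ((1/2) * ∑ x ∈ endpts a b, dist x (τ x))
      ≤ ∑ i, dist (a i) (b i) := by
  classical
  set E : (Fin n ⊕ Fin n) → Pt := Sum.elim a b with hEdef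
  have hEinj : Function.Injective E := hdist
  -- endpts as image of E
  have hSeq : endpts a b = Finset.univ.image E := by
    ext x
    simp [endpts, hEdef, Sum.exists]
  have hmem : ∀ u, E u ∈ endpts a b := by
    intro u; rw [hSeq]; exact Finset.mem_image_of_mem _ (Finset.mem_univ u)
  -- the involution τ transported to indices
  have htex : ∀ u : Fin n ⊕ Fin n, ∃ v, E v = τ (E u) := by
    intro u
    have h := hτ.1 _ (hmem u)
    rw [hSeq] at h
    obtain ⟨v, -, hv⟩ := Finset.mem_image.mp h
    exact ⟨v, hv⟩
  choose t ht using htex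
  have htinj : Function.Injective t := by
    intro u v huv
    apply hEinj
    have h1 : τ (E u) = τ (E v) := by rw [← ht, ← ht, huv]
    have h2 := congrArg τ h1
    rwa [hτ.2.1 _ (hmem u), hτ.2.1 _ (hmem v)] at h2
  have hfpf : ∀ u, t u ≠ u := by
    intro u h
    exact hτ.2.2 _ (hmem u) (by rw [← ht, h])
  have hswapne : ∀ u : Fin n ⊕ Fin n, Sum.swap u ≠ u := by
    rintro (i | i) h <;> simp at h
  -- idx facts
  have hidx : ∀ u v : Fin n ⊕ Fin n,
      Sum.elim id id u = Sum.elim id id v → v = u ∨ v = Sum.swap u := by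
    rintro (i | i) (j | j) h <;> simp_all
  have hidxswap : ∀ u : Fin n ⊕ Fin n,
      Sum.elim (id : Fin n → Fin n) id (Sum.swap u) = Sum.elim id id u := by
    rintro (i | i) <;> rfl
  have hDswap : ∀ u, dist (E (Sum.swap u)) (E (Sum.swap (Sum.swap u))) =
      dist (E u) (E (Sum.swap u)) := by
    intro u; rw [Sum.swap_swap, dist_comm]
  -- the cross inequality (local optimality, indexed form)
  have hcross : ∀ u v : Fin n ⊕ Fin n, Sum.elim id id u ≠ Sum.elim id id v →
      dist (E u) (E v) + dist (E (Sum.swap u)) (E (Sum.swap v)) ≤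
        dist (E u) (E (Sum.swap u)) + dist (E v) (E (Sum.swap v)) := by
    rintro (i | i) (j | j) h <;> simp only [Sum.elim_inl, Sum.elim_inr, id] at h <;>
      simp only [hEdef, Sum.swap_inl, Sum.swap_inr, Sum.elim_inl, Sum.elim_inr] <;>
      [ exact (hlocal i j h).1;
        (have := (hlocal i j h).2; linarith [dist_comm (a j) (b i), dist_comm (a j) (b j)]);
        (have := (hlocal i j h).2; linarith [dist_comm (a i) (b i), dist_comm (a i) (b j),
            dist_comm (a j) (b i)]);
        (have := (hlocal i j h).1; linarith [dist_comm (a i) (b i), dist_comm (a j) (b j),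
            dist_comm (a i) (a j), dist_comm (b i) (b j)]) ]
  -- key pointwise inequality
  have hkey : ∀ u : Fin n ⊕ Fin n,
      dist (E u) (E (t u)) + dist (E (Sum.swap u)) (E (t (Sum.swap u))) ≤
        dist (E u) (E (Sum.swap u)) + dist (E (t u)) (E (Sum.swap (t u)))
          + dist (E (t (Sum.swap u))) (E (Sum.swap (t (Sum.swap u)))) := by
    intro u
    by_cases h1 : t u = Sum.swap u
    · have h2 : t (Sum.swap u) = u := by
        apply hEinj
        rw [ht, ← h1, ht]
        exact hτ.2.1 _ (hmem u)
      rw [h1, h2, Sum.swap_swap]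
      have d1 : dist (E (Sum.swap u)) (E u) = dist (E u) (E (Sum.swap u)) := dist_comm _ _
      have d2 : (0:ℝ) ≤ dist (E u) (E (Sum.swap u)) := dist_nonneg
      linarith
    · have h2 : t u ≠ u := hfpf u
      have hidx1 : Sum.elim (id : Fin n → Fin n) id u ≠ Sum.elim id id (t u) := by
        intro hcon
        rcases hidx _ _ hcon with h | h
        · exact h2 h
        · exact h1 h
      have h3 : t (Sum.swap u) ≠ u := by
        intro hcon
        apply h1
        apply hEinj
        rw [ht]
        have e1 : τ (E (Sum.swap u)) = E u := by rw [← ht, hcon]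
        have e2 := congrArg τ e1
        rw [hτ.2.1 _ (hmem (Sum.swap u))] at e2
        exact e2.symm
      by_cases h4 : t (Sum.swap u) = Sum.swap (t u)
      · have hc := hcross u (t u) hidx1
        rw [h4, Sum.swap_swap]
        have d2 : (0:ℝ) ≤ dist (E (t u)) (E (Sum.swap (t u))) := dist_nonneg
        have d3 : dist (E (Sum.swap (t u))) (E (t u)) = dist (E (t u)) (E (Sum.swap (t u))) :=
          dist_comm _ _
        linarith
      · have hidx2 : Sum.elim (id : Fin n → Fin n) id u ≠ Sum.elim id id (t (Sum.swap u)) := by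
          intro hcon
          rcases hidx _ _ hcon with h | h
          · exact h3 h
          · exact hfpf _ h
        have hidx3 : Sum.elim (id : Fin n → Fin n) id (t u) ≠
            Sum.elim id id (t (Sum.swap u)) := by
          intro hcon
          rcases hidx _ _ hcon with h | h
          · exact hswapne u (htinj h)
          · exact h4 h
        have hidx2' : Sum.elim (id : Fin n → Fin n) id u ≠
            Sum.elim id id (Sum.swap (t (Sum.swap u))) := by
          rw [hidxswap]; exact hidx2
        have hidx3' : Sum.elim (id : Fin n → Fin n) id (t u) ≠
            Sum.elim id id (Sum.swap (t (Sum.swap u))) := by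
          rw [hidxswap]; exact hidx3
        have T1 : dist (E u) (E (t u)) ≤
            dist (E u) (E (Sum.swap (t (Sum.swap u))))
              + dist (E (Sum.swap (t (Sum.swap u)))) (E (t u)) := dist_triangle _ _ _
        have T2 : dist (E (Sum.swap u)) (E (t (Sum.swap u))) ≤
            dist (E (Sum.swap u)) (E (Sum.swap (t u)))
              + dist (E (Sum.swap (t u))) (E (t (Sum.swap u))) := dist_triangle _ _ _
        have C1 := hcross u (t u) hidx1
        have C2 := hcross u (Sum.swap (t (Sum.swap u))) hidx2'
        have C3 := hcross (t u) (Sum.swap (t (Sum.swap u))) hidx3'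
        rw [Sum.swap_swap] at C2 C3
        have d3 : dist (E (Sum.swap (t (Sum.swap u)))) (E (t (Sum.swap u))) =
            dist (E (t (Sum.swap u))) (E (Sum.swap (t (Sum.swap u)))) := dist_comm _ _
        have d1 : dist (E (Sum.swap (t (Sum.swap u)))) (E (t u)) =
            dist (E (t u)) (E (Sum.swap (t (Sum.swap u)))) := dist_comm _ _
        have d2 : dist (E (Sum.swap (t u))) (E (t (Sum.swap u))) =
            dist (E (t (Sum.swap u))) (E (Sum.swap (t u))) := dist_comm _ _
        linarith
  -- sum over endpoints
  have hsum1 : ∑ x ∈ endpts a b, dist x (τ x) = ∑ u, dist (E u) (E (t u)) := by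
    rw [hSeq, Finset.sum_image (fun x _ y _ h => hEinj h)]
    exact Finset.sum_congr rfl fun u _ => by rw [ht]
  have hswapbij : Function.Bijective (Sum.swap : Fin n ⊕ Fin n → Fin n ⊕ Fin n) :=
    Function.Involutive.bijective Sum.swap_swap
  have htbij : Function.Bijective t := Finite.injective_iff_bijective.mp htinj
  have hb1 : ∑ u, dist (E (Sum.swap u)) (E (t (Sum.swap u)))
      = ∑ u, dist (E u) (E (t u)) :=
    hswapbij.sum_comp fun u => dist (E u) (E (t u))
  have hb2 : ∑ u, dist (E (t u)) (E (Sum.swap (t u)))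
      = ∑ u, dist (E u) (E (Sum.swap u)) :=
    htbij.sum_comp fun u => dist (E u) (E (Sum.swap u))
  have hb3 : ∑ u, dist (E (t (Sum.swap u))) (E (Sum.swap (t (Sum.swap u))))
      = ∑ u, dist (E u) (E (Sum.swap u)) :=
    (htbij.comp hswapbij).sum_comp fun u => dist (E u) (E (Sum.swap u))
  have hsumD : ∑ u, dist (E u) (E (Sum.swap u)) = 2 * ∑ i, dist (a i) (b i) := by
    rw [Fintype.sum_sum_type]
    simp only [hEdef, Sum.swap_inl, Sum.swap_inr, Sum.elim_inl, Sum.elim_inr]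
    rw [two_mul]
    congr 1
    exact Finset.sum_congr rfl fun i _ => dist_comm _ _
  have hmain : 2 * ∑ u, dist (E u) (E (t u)) ≤ 6 * ∑ i, dist (a i) (b i) := by
    have hs := Finset.sum_le_sum fun u (_ : u ∈ Finset.univ) => hkey u
    rw [Finset.sum_add_distrib, Finset.sum_add_distrib, Finset.sum_add_distrib] at hs
    rw [hb1, hb2, hb3, hsumD] at hs
    linarith
  have hWnn : (0:ℝ) ≤ ∑ x ∈ endpts a b, dist x (τ x) :=
    Finset.sum_nonneg fun x _ => dist_nonneg
  have hsq : Real.sqrt (3/7) ≤ 2/3 := by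
    have h1 : Real.sqrt (3/7) ≤ Real.sqrt ((2/3)^2) := Real.sqrt_le_sqrt (by norm_num)
    rwa [Real.sqrt_sq (by norm_num : (0:ℝ) ≤ 2/3)] at h1
  have hW : ∑ x ∈ endpts a b, dist x (τ x) ≤ 3 * ∑ i, dist (a i) (b i) := by
    rw [hsum1]; linarith
  nlinarith [mul_le_mul_of_nonneg_right hsq hWnn, Real.sqrt_nonneg (3/7 : ℝ)]

end
end

section
/- Let a, p, b, q be points in ℝ² that are the vertices of a convex quadrilateral appearing in this cyclic order along its boundary (equivalently, the open segments from a to b and from p to q intersect). If dist(p,a) = dist(p,b) and the angle ∠aqb (the angle at q in the triangle a q b) is at least 2π/3, then dist(p,q) ≤ (2/√3) · dist(p,a). -/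
noncomputable section

theorem quadrilateral_diag_bound (a p b q : Pt)
    (hconvex : (openSegment ℝ a b ∩ openSegment ℝ p q).Nonempty)
    (hiso : dist p a = dist p b)
    (hangle : 2 * Real.pi / 3 ≤ EuclideanGeometry.angle a q b) :
    dist p q ≤ (2 / Real.sqrt 3) * dist p a := by
  have hpi := Real.pi_pos
  -- nondegeneracy: q ≠ a (else angle = π/2 < 2π/3)
  have hqa : q ≠ a := by
    rintro rfl
    rw [EuclideanGeometry.angle_self_left] at hangle
    linarith
  have hqb : q ≠ b := by
    rintro rfl
    rw [EuclideanGeometry.angle_comm, EuclideanGeometry.angle_self_left] at hangle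
    linarith
  set s : ℝ := dist a q with hs
  set t : ℝ := dist b q with ht
  set d : ℝ := dist a b with hd
  set r : ℝ := dist p a with hr
  set L : ℝ := dist p q with hL
  have hs0 : 0 < s := dist_pos.2 (Ne.symm hqa)
  have ht0 : 0 < t := dist_pos.2 (Ne.symm hqb)
  have hd0 : 0 ≤ d := dist_nonneg
  have hr0 : 0 ≤ r := dist_nonneg
  have hL0 : 0 ≤ L := dist_nonneg
  -- cosine bound
  have hcos : Real.cos (EuclideanGeometry.angle a q b) ≤ -(1/2) := by
    have h23 : Real.cos (2 * Real.pi / 3) = -(1/2) := by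
      rw [show (2 * Real.pi / 3) = Real.pi - Real.pi / 3 by ring, Real.cos_pi_sub,
        Real.cos_pi_div_three]
    calc Real.cos (EuclideanGeometry.angle a q b)
        ≤ Real.cos (2 * Real.pi / 3) :=
        Real.cos_le_cos_of_nonneg_of_le_pi (by linarith)
          (EuclideanGeometry.angle_le_pi a q b) hangle
      _ = -(1/2) := h23
  -- law of cosines: d² ≥ s² + t² + s t
  have hlaw := EuclideanGeometry.law_cos a q b
  rw [← hd, ← hs, ← ht] at hlaw
  have hdsq : s * s + t * t + s * t ≤ d * d := by nlinarith [mul_pos hs0 ht0]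
  -- hence √3 (s + t) ≤ 2 d
  have h3 : (0:ℝ) < Real.sqrt 3 := Real.sqrt_pos.2 (by norm_num)
  have hsq3 : Real.sqrt 3 * Real.sqrt 3 = 3 := Real.mul_self_sqrt (by norm_num)
  have hkey : Real.sqrt 3 * (s + t) ≤ 2 * d := by
    nlinarith [sq_nonneg (s - t), sq_nonneg (2 * d - Real.sqrt 3 * (s + t)),
      mul_pos h3 (by linarith : (0:ℝ) < s + t)]
  have hd0' : 0 < d := by nlinarith
  -- Ptolemy's inequality
  have hpt := EuclideanGeometry.mul_dist_le_mul_dist_add_mul_dist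
    (V := EuclideanSpace ℝ (Fin 2)) a p b q
  rw [← hd, ← hL, ← hs, ← ht, dist_comm a p, ← hr, ← hiso] at hpt
  -- combine: √3 d L ≤ √3 r (s+t) ≤ 2 d r
  have h1 : Real.sqrt 3 * L ≤ 2 * r := by
    have : Real.sqrt 3 * (d * L) ≤ 2 * d * r := by
      calc Real.sqrt 3 * (d * L) ≤ Real.sqrt 3 * (r * t + r * s) := by
            apply mul_le_mul_of_nonneg_left hpt h3.le
        _ = r * (Real.sqrt 3 * (s + t)) := by ring
        _ ≤ r * (2 * d) := mul_le_mul_of_nonneg_left hkey hr0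
        _ = 2 * d * r := by ring
    nlinarith
  rw [div_mul_eq_mul_div, le_div_iff₀ h3]
  nlinarith
end
end

section
/- Let I be a nonempty finite index set, and for each i ∈ I let Dᵢ be the closed disk in ℝ² with center cᵢ and radius rᵢ ≥ 0. Suppose the disks pairwise intersect: for all i, j ∈ I, Dᵢ ∩ Dⱼ ≠ ∅ (equivalently dist(cᵢ,cⱼ) ≤ rᵢ + rⱼ). Then the enlarged disks obtained by scaling every radius by the factor 2/√3 while keeping the centers have a common point: ⋂_{i∈I} closedBall(cᵢ, (2/√3)·rᵢ) ≠ ∅. -/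
noncomputable section

/-! Let `p` minimize `max_i dist p (c i) / r i`, with minimum `t`. Were `p` outside the convex hull
of the centers attaining the maximum, a small step towards that hull would lower the maximum; so
`p` lies in it and, by Carathéodory in the plane, is a positive combination of at most three of
them. Two of the vectors `c i - p`, `c j - p` then make an angle of at least `2π/3`, whence
`‖c i - c j‖² ≥ t² (r i² + r i r j + r j²) ≥ (3/4) t² (r i + r j)²`, and `‖c i - c j‖ ≤ r i + r j`
gives `t ≤ 2/√3`. A disk of radius zero is a point lying in all the other disks. -/

open Finset Filter Topology
open scoped RealInnerProductSpace

section InnerProductSpace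

variable {E : Type*} [NormedAddCommGroup E] [InnerProductSpace ℝ E]

theorem three_mul_norm_add_norm_sq_le {u w : E} (h : ⟪u, w⟫ ≤ -(1 / 2) * (‖u‖ * ‖w‖)) :
    3 * (‖u‖ + ‖w‖) ^ 2 ≤ 4 * ‖u - w‖ ^ 2 := by
  rw [norm_sub_sq_real]
  nlinarith [sq_nonneg (‖u‖ - ‖w‖)]

/-- Test the relation against the vector `v k` of largest weighted length `a k * ‖v k‖`: its
at most two partners cannot cancel it unless one of them makes an angle of at least `2π/3`. -/
theorem exists_inner_le_neg_half_of_sum_smul_eq_zero {ι : Type*} [Fintype ι] [Nonempty ι]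
    (hcard : Fintype.card ι ≤ 3) {a : ι → ℝ} (ha : ∀ k, 0 < a k) {v : ι → E}
    (hv : ∑ k, a k • v k = 0) : ∃ k l, ⟪v k, v l⟫ ≤ -(1 / 2) * (‖v k‖ * ‖v l‖) := by
  classical
  by_contra! h
  obtain ⟨k, -, hk⟩ := exists_max_image univ (fun k => a k * ‖v k‖) univ_nonempty
  have hvk : 0 < ‖v k‖ := by
    have := h k k
    rw [real_inner_self_eq_norm_sq] at this
    nlinarith [norm_nonneg (v k)]
  have hzero : a k * ‖v k‖ ^ 2 + ∑ l ∈ univ.erase k, a l * ⟪v k, v l⟫ = 0 := by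
    have := congrArg (fun x => ⟪v k, x⟫) hv
    simp only [inner_sum, real_inner_smul_right, inner_zero_right] at this
    rwa [← add_sum_erase _ _ (mem_univ k), real_inner_self_eq_norm_sq] at this
  rcases (univ.erase k).eq_empty_or_nonempty with hempty | hne
  · rw [hempty, sum_empty, add_zero] at hzero
    exact (mul_pos (ha k) (pow_pos hvk 2)).ne' hzero
  have hlt : ∑ l ∈ univ.erase k, -(1 / 2) * ‖v k‖ * (a l * ‖v l‖)
      < ∑ l ∈ univ.erase k, a l * ⟪v k, v l⟫ :=
    sum_lt_sum_of_nonempty hne fun l _ => by nlinarith [h k l, ha l]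
  have hle : ∑ l ∈ univ.erase k, a l * ‖v l‖ ≤ 2 * (a k * ‖v k‖) := by
    calc ∑ l ∈ univ.erase k, a l * ‖v l‖ ≤ #(univ.erase k) • (a k * ‖v k‖) :=
          sum_le_card_nsmul _ _ _ fun l _ => hk l (mem_univ l)
      _ ≤ 2 * (a k * ‖v k‖) := by
          rw [nsmul_eq_mul, card_erase_of_mem (mem_univ k), card_univ]
          gcongr
          · exact mul_nonneg (ha k).le (norm_nonneg _)
          · norm_cast; omega
  rw [← mul_sum] at hlt
  nlinarith [ha k]

theorem exists_inner_sub_le_neg_half_of_mem_convexHull [FiniteDimensional ℝ E]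
    (hE : Module.finrank ℝ E ≤ 2) {S : Set E} {p : E} (hp : p ∈ convexHull ℝ S) :
    ∃ x ∈ S, ∃ y ∈ S, ⟪x - p, y - p⟫ ≤ -(1 / 2) * (‖x - p‖ * ‖y - p‖) := by
  obtain ⟨ι, _, z, w, hzS, hz, hw, hw1, hwp⟩ := eq_pos_convex_span_of_mem_convexHull hp
  have : Nonempty ι := by
    by_contra! hι
    simp at hw1
  have hcard : Fintype.card ι ≤ 3 := by
    have := Submodule.finrank_le (vectorSpan ℝ (Set.range z))
    have := hz.card_le_finrank_succ
    omega
  have hsum : ∑ k, w k • (z k - p) = 0 := by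
    simp only [smul_sub, sum_sub_distrib, hwp, ← sum_smul, hw1, one_smul, sub_self]
  obtain ⟨k, l, hkl⟩ := exists_inner_le_neg_half_of_sum_smul_eq_zero hcard hw hsum
  exact ⟨z k, hzS ⟨k, rfl⟩, z l, hzS ⟨l, rfl⟩, hkl⟩

/-- Moving from `p` towards its nearest point in `K` brings it strictly closer to all of `K`,
since `K` lies in the half-space on the far side of that nearest point. -/
theorem exists_forall_dist_add_smul_lt {K : Set E} (hK : Convex ℝ K) (hKc : IsComplete K)
    {p : E} (hp : p ∉ K) :
    ∃ v : E, ∀ s ∈ Set.Ioc (0 : ℝ) 1, ∀ y ∈ K, dist (p + s • v) y < dist p y := by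
  rcases K.eq_empty_or_nonempty with rfl | hne
  · exact ⟨0, by simp⟩
  obtain ⟨x, hxK, hx⟩ := exists_norm_eq_iInf_of_complete_convex hne hKc hK p
  have hfar := (norm_eq_iInf_iff_real_inner_le_zero hK hxK).1 hx
  have hxp : 0 < ‖x - p‖ := norm_pos_iff.2 (sub_ne_zero.2 fun h => hp (h ▸ hxK))
  refine ⟨x - p, fun s ⟨hs0, hs1⟩ y hy => ?_⟩
  have hinner : ⟪p - y, x - p⟫ ≤ -‖x - p‖ ^ 2 := by
    have hobtuse := hfar y hy
    have hnorm := real_inner_self_eq_norm_sq (x - p)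
    simp only [inner_sub_left, inner_sub_right] at hobtuse hnorm ⊢
    linarith [real_inner_comm x p, real_inner_comm x y, real_inner_comm p y]
  have hsq : ‖p + s • (x - p) - y‖ ^ 2 < ‖p - y‖ ^ 2 := by
    rw [show p + s • (x - p) - y = (p - y) + s • (x - p) by abel, norm_add_sq_real,
      real_inner_smul_right, norm_smul, Real.norm_of_nonneg hs0.le]
    nlinarith [mul_pos hs0 (pow_pos hxp 2)]
  rw [dist_eq_norm, dist_eq_norm]
  exact lt_of_pow_lt_pow_left₀ 2 (norm_nonneg _) hsq

end InnerProductSpace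

section ChebyshevCenter

variable {E : Type*} {I : Type*}

/-- For positive weights `r`: `p` minimizes `max_i dist p (c i) / r i`, with minimum `t`. -/
def IsWeightedChebyshevCenter [PseudoMetricSpace E] (c : I → E) (r : I → ℝ) (t : ℝ) (p : E) :
    Prop :=
  (∀ i, dist p (c i) ≤ t * r i) ∧ ∀ q, ∃ i, t * r i ≤ dist q (c i)

theorem exists_isWeightedChebyshevCenter [PseudoMetricSpace E] [ProperSpace E] [Fintype I]
    [Nonempty I] (c : I → E) {r : I → ℝ} (hr : ∀ i, 0 < r i) :
    ∃ t p, IsWeightedChebyshevCenter c r t p := by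
  obtain ⟨i₀⟩ := ‹Nonempty I›
  have : Nonempty E := ⟨c i₀⟩
  set f : E → ℝ := fun q => univ.sup' univ_nonempty fun i => dist q (c i) / r i
  have hf : Continuous f := Continuous.finset_sup'_apply univ_nonempty fun i _ =>
    (continuous_id.dist continuous_const).div_const _
  have hcoercive : Tendsto f (cocompact E) atTop :=
    tendsto_atTop_mono (fun q => le_sup' (fun i => dist q (c i) / r i) (mem_univ i₀))
      ((tendsto_dist_right_cocompact_atTop (c i₀)).atTop_div_const (hr i₀))
  obtain ⟨p, hp⟩ := hf.exists_forall_le hcoercive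
  refine ⟨f p, p, fun i => ?_, fun q => ?_⟩
  · exact (div_le_iff₀ (hr i)).1 (le_sup' (fun i => dist p (c i) / r i) (mem_univ i))
  · obtain ⟨i, -, hi⟩ := exists_mem_eq_sup' univ_nonempty fun i => dist q (c i) / r i
    exact ⟨i, (le_div_iff₀ (hr i)).1 (hi ▸ hp q)⟩

theorem IsWeightedChebyshevCenter.mem_convexHull [NormedAddCommGroup E] [InnerProductSpace ℝ E]
    [Finite I] {c : I → E} {r : I → ℝ} {t : ℝ} {p : E} (h : IsWeightedChebyshevCenter c r t p) :
    p ∈ convexHull ℝ (c '' {i | dist p (c i) = t * r i}) := by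
  by_contra hp
  set A := {i | dist p (c i) = t * r i}
  have hK : IsCompact (convexHull ℝ (c '' A)) := ((Set.toFinite A).image c).isCompact_convexHull ℝ
  obtain ⟨v, hv⟩ := exists_forall_dist_add_smul_lt (convex_convexHull ℝ _) hK.isComplete hp
  have hstep : ∀ i, ∀ᶠ s in 𝓝[>] (0 : ℝ), dist (p + s • v) (c i) < t * r i := by
    intro i
    by_cases hi : i ∈ A
    · filter_upwards [Ioc_mem_nhdsGT one_pos] with s hs
      exact hi ▸ hv s hs (c i) (subset_convexHull ℝ _ (Set.mem_image_of_mem c hi))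
    · have hcont : Continuous fun s : ℝ => dist (p + s • v) (c i) := by fun_prop
      refine nhdsWithin_le_nhds (hcont.continuousAt.eventually_lt continuousAt_const ?_)
      simpa using (h.1 i).lt_of_ne hi
  obtain ⟨s, hs⟩ := (eventually_all.2 hstep).exists
  obtain ⟨i, hi⟩ := h.2 (p + s • v)
  exact lt_irrefl _ (hi.trans_lt (hs i))

end ChebyshevCenter

theorem le_two_div_sqrt_three {t : ℝ} (ht : 3 * t ^ 2 ≤ 4) : t ≤ 2 / Real.sqrt 3 := by
  rw [le_div_iff₀ (by positivity)]
  nlinarith [Real.sq_sqrt (show (0 : ℝ) ≤ 3 by norm_num), Real.sqrt_nonneg 3]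

theorem enlarged_disks_common_point {I : Type*} [Fintype I] [Nonempty I]
    (c : I → Pt) (r : I → ℝ) (hr : ∀ i, 0 ≤ r i)
    (hpair : ∀ i j : I,
      (Metric.closedBall (c i) (r i) ∩ Metric.closedBall (c j) (r j)).Nonempty) :
    (⋂ i : I, Metric.closedBall (c i) ((2 / Real.sqrt 3) * r i)).Nonempty := by
  have hdist i j := Metric.dist_le_add_of_nonempty_closedBall_inter_closedBall (hpair i j)
  by_cases hzero : ∃ i, r i = 0
  · obtain ⟨i, hi⟩ := hzero
    refine ⟨c i, Set.mem_iInter.2 fun j => ?_⟩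
    have hij : dist (c i) (c j) ≤ r j := by simpa [hi] using hdist i j
    exact hij.trans (le_mul_of_one_le_left (hr j) (le_two_div_sqrt_three (by norm_num)))
  have hrpos i : 0 < r i := (hr i).lt_of_ne' (not_exists.1 hzero i)
  obtain ⟨t, p, hp⟩ := exists_isWeightedChebyshevCenter c hrpos
  obtain ⟨_, ⟨i, hi, rfl⟩, _, ⟨j, hj, rfl⟩, hij⟩ :=
    exists_inner_sub_le_neg_half_of_mem_convexHull finrank_euclideanSpace_fin.le
      hp.mem_convexHull
  have hpos : 0 < r i + r j := add_pos (hrpos i) (hrpos j)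
  have hsep := three_mul_norm_add_norm_sq_le hij
  rw [sub_sub_sub_cancel_right, ← dist_eq_norm, ← dist_eq_norm, ← dist_eq_norm, dist_comm (c i),
    hi, dist_comm (c j), hj, ← mul_add, mul_pow, ← mul_assoc] at hsep
  have ht : 3 * t ^ 2 ≤ 4 := by
    refine le_of_mul_le_mul_right (hsep.trans ?_) (pow_pos hpos 2)
    gcongr
    exact hdist i j
  exact ⟨p, Set.mem_iInter.2 fun k =>
    (hp.1 k).trans (mul_le_mul_of_nonneg_right (le_two_div_sqrt_three ht) (hr k))⟩
end
end

section
/- The factor 2/√3 in the disk-enlargement theorem is tight: let c₁, c₂, c₃ ∈ ℝ² be the vertices of an equilateral triangle of side length 2. Then the three closed unit disks closedBall(cᵢ, 1) pairwise intersect, yet for every real λ with 0 ≤ λ < 2/√3, the intersection closedBall(c₁, λ) ∩ closedBall(c₂, λ) ∩ closedBall(c₃, λ) is empty. -/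
/-!
Any point `x` of the plane satisfies
`|c₁ - c₂|² + |c₁ - c₃|² + |c₂ - c₃|² + |3x - c₁ - c₂ - c₃|² = 3 (|x - c₁|² + |x - c₂|² + |x - c₃|²)`,
so a point within distance `λ` of all three vertices forces `12 ≤ 9 λ²`, i.e. `λ ≥ 2/√3`.
The unit disks around two vertices meet at the midpoint of the side joining them.
-/

noncomputable section

open Metric

section NormedSpace

variable {E : Type*} [NormedAddCommGroup E] [NormedSpace ℝ E]

lemma midpoint_mem_closedBall_inter_closedBall {a b : E} {r : ℝ} (h : dist a b ≤ 2 * r) :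
    midpoint ℝ a b ∈ closedBall a r ∩ closedBall b r := by
  simp only [Set.mem_inter_iff, mem_closedBall, dist_midpoint_left, dist_midpoint_right,
    Real.norm_ofNat]
  constructor <;> linarith

end NormedSpace

section InnerProductSpace

variable {E : Type*} [NormedAddCommGroup E] [InnerProductSpace ℝ E]

lemma norm_sub_sq_add_norm_sub_sq_add_norm_sub_sq_add_norm_add_add_sq (u v w : E) :
    ‖u - v‖ ^ 2 + ‖u - w‖ ^ 2 + ‖v - w‖ ^ 2 + ‖u + v + w‖ ^ 2 =
      3 * (‖u‖ ^ 2 + ‖v‖ ^ 2 + ‖w‖ ^ 2) := by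
  rw [norm_sub_sq_real, norm_sub_sq_real, norm_sub_sq_real, norm_add_sq_real, norm_add_sq_real,
    inner_add_left]
  ring

lemma dist_sq_add_dist_sq_add_dist_sq_le (a b c x : E) :
    dist a b ^ 2 + dist a c ^ 2 + dist b c ^ 2 ≤
      3 * (dist x a ^ 2 + dist x b ^ 2 + dist x c ^ 2) := by
  have h := norm_sub_sq_add_norm_sub_sq_add_norm_sub_sq_add_norm_add_add_sq (x - a) (x - b) (x - c)
  simp only [sub_sub_sub_cancel_left, ← dist_eq_norm] at h
  rw [dist_comm b a, dist_comm c a, dist_comm c b] at h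
  linarith [sq_nonneg ‖x - a + (x - b) + (x - c)‖]

lemma closedBall_inter_closedBall_inter_closedBall_eq_empty {a b c : E} {r : ℝ}
    (h : 9 * r ^ 2 < dist a b ^ 2 + dist a c ^ 2 + dist b c ^ 2) :
    closedBall a r ∩ closedBall b r ∩ closedBall c r = ∅ := by
  refine Set.eq_empty_iff_forall_notMem.2 fun x ⟨⟨hxa, hxb⟩, hxc⟩ ↦ ?_
  rw [mem_closedBall] at hxa hxb hxc
  have hsq {p : E} (hp : dist x p ≤ r) : dist x p ^ 2 ≤ r ^ 2 :=
    pow_le_pow_left₀ dist_nonneg hp 2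
  linarith [dist_sq_add_dist_sq_add_dist_sq_le a b c x, hsq hxa, hsq hxb, hsq hxc]

end InnerProductSpace

theorem enlargement_factor_tight (c₁ c₂ c₃ : Pt)
    (h12 : dist c₁ c₂ = 2) (h13 : dist c₁ c₃ = 2) (h23 : dist c₂ c₃ = 2) :
    ((Metric.closedBall c₁ 1 ∩ Metric.closedBall c₂ 1).Nonempty ∧
     (Metric.closedBall c₁ 1 ∩ Metric.closedBall c₃ 1).Nonempty ∧
     (Metric.closedBall c₂ 1 ∩ Metric.closedBall c₃ 1).Nonempty) ∧
    ∀ lam : ℝ, 0 ≤ lam → lam < 2 / Real.sqrt 3 →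
      Metric.closedBall c₁ lam ∩ Metric.closedBall c₂ lam ∩ Metric.closedBall c₃ lam = ∅ := by
  refine ⟨⟨⟨_, midpoint_mem_closedBall_inter_closedBall (by linarith)⟩,
    ⟨_, midpoint_mem_closedBall_inter_closedBall (by linarith)⟩,
    ⟨_, midpoint_mem_closedBall_inter_closedBall (by linarith)⟩⟩, fun lam hlam0 hlam ↦ ?_⟩
  apply closedBall_inter_closedBall_inter_closedBall_eq_empty
  have hsq : lam ^ 2 < 4 / 3 := by
    calc lam ^ 2 < (2 / Real.sqrt 3) ^ 2 := pow_lt_pow_left₀ hlam hlam0 two_ne_zero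
      _ = 4 / 3 := by rw [div_pow, Real.sq_sqrt zero_le_three]; norm_num
  rw [h12, h13, h23]
  linarith
end
end

section
/- Let P be a finite set of 2n points in ℝ² (n ≥ 1) with no three points of P collinear, and let M be a pairwise crossing perfect matching on P. Then for every edge (a,b) of M, the line through a and b has exactly n − 1 points of P strictly on each of its two sides. -/
/-!
Every other edge `{q, σ q}` of the matching crosses the open segment `a (σ a)`, so the line
through `a` and `σ a` strictly separates `q` from `σ q`; by general position no other point of
`P` lies on that line. Hence `σ` is an involution of the remaining `2n - 2` points exchanging the
two open half-planes, and each half-plane contains exactly `n - 1` of them.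
-/

noncomputable section

open Module

namespace Finset

theorem two_mul_card_filter_of_involution {α : Type*} {T : Finset α} (p : α → Prop)
    [DecidablePred p] {σ : α → α} (hmap : ∀ x ∈ T, σ x ∈ T) (hinv : ∀ x ∈ T, σ (σ x) = x)
    (hswap : ∀ x ∈ T, p (σ x) ↔ ¬ p x) : 2 * #(T.filter p) = #T := by
  have h : #(T.filter p) = #(T.filter (¬ p ·)) := by
    refine card_nbij' σ σ ?_ ?_ (fun x hx => hinv x (mem_filter.1 hx).1)
      (fun x hx => hinv x (mem_filter.1 hx).1)
    · intro x hx
      simp only [coe_filter, Set.mem_ofPred_eq] at hx ⊢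
      exact ⟨hmap x hx.1, fun h => (hswap x hx.1).1 h hx.2⟩
    · intro x hx
      simp only [coe_filter, Set.mem_ofPred_eq] at hx ⊢
      exact ⟨hmap x hx.1, (hswap x hx.1).2 hx.2⟩
  have := card_filter_add_card_filter_not (s := T) p
  omega

theorem apply_mem_erase_erase_of_involution {α : Type*} [DecidableEq α] {P : Finset α}
    {σ : α → α} (hmap : ∀ x ∈ P, σ x ∈ P) (hinv : ∀ x ∈ P, σ (σ x) = x) {a q : α} (ha : a ∈ P)
    (hq : q ∈ (P.erase a).erase (σ a)) : σ q ∈ (P.erase a).erase (σ a) := by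
  simp only [mem_erase] at hq ⊢
  obtain ⟨hqb, hqa, hqP⟩ := hq
  refine ⟨fun h => hqa ?_, fun h => hqb ?_, hmap q hqP⟩
  · rw [← hinv q hqP, h, hinv a ha]
  · rw [← hinv q hqP, h]

end Finset

namespace AffineSubspace

theorem finrank_quotient_direction_affineSpan_pair {R V P : Type*} [Field R] [AddCommGroup V]
    [Module R V] [Module.Finite R V] [AddTorsor V P] (hV : finrank R V = 2) {a b : P}
    (hab : a ≠ b) : finrank R (V ⧸ line[R, a, b].direction) = 1 := by
  have h := Submodule.finrank_quotient_add_finrank line[R, a, b].direction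
  rw [direction_affineSpan, vectorSpan_pair] at h ⊢
  rw [finrank_span_singleton (vsub_ne_zero.2 hab)] at h
  omega

variable {R V P : Type*} [Field R] [LinearOrder R] [IsStrictOrderedRing R]
  [AddCommGroup V] [Module R V] [AddTorsor V P]

theorem sSameSide_or_sOppSide_of_finrank_quotient_eq_one [Module.Finite R V]
    {s : AffineSubspace R P} (hs : finrank R (V ⧸ s.direction) = 1) {p x y : P} (hp : p ∈ s)
    (hx : x ∉ s) (hy : y ∉ s) : s.SSameSide x y ∨ s.SOppSide x y := by
  have hv : x -ᵥ p ∉ s.direction := fun h => hx ((vsub_right_mem_direction_iff_mem hp x).1 h)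
  have hy' : y -ᵥ p ∈ s.direction ⊔ R ∙ (x -ᵥ p) := by
    rw [(Submodule.sup_span_singleton_eq_top_iff hv).2 hs]
    exact Submodule.mem_top
  obtain ⟨d, hd, w, hw, hdw⟩ := Submodule.mem_sup.1 hy'
  obtain ⟨c, rfl⟩ := Submodule.mem_span_singleton.1 hw
  have hq : d +ᵥ p ∈ s := vadd_mem_of_mem_direction hd hp
  have hyq : y -ᵥ (d +ᵥ p) = c • (x -ᵥ p) := by
    rw [vsub_vadd_eq_vsub_sub, ← hdw, add_sub_cancel_left]
  have hxp : x -ᵥ p = (1 : R) • (x -ᵥ p) := (one_smul R _).symm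
  rcases le_total 0 c with hc | hc
  · exact .inl (sSameSide_of_vsub_eq_smul hp hq hxp hyq (by simpa) hx hy)
  · exact .inr (sOppSide_of_vsub_eq_smul hp hq hxp hyq (by simpa) hx hy)

theorem SOppSide.sSameSide_iff {s : AffineSubspace R P} {x y z : P} (hyz : s.SOppSide y z) :
    s.SSameSide x z ↔ s.SOppSide x y :=
  ⟨fun h => h.trans_sOppSide hyz.symm, fun h => h.trans hyz⟩

theorem two_mul_card_filter_sSameSide [Module.Finite R V] {s : AffineSubspace R P}
    (hs : finrank R (V ⧸ s.direction) = 1) {T : Finset P} {σ : P → P}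
    (hmap : ∀ q ∈ T, σ q ∈ T) (hinv : ∀ q ∈ T, σ (σ q) = q)
    (hopp : ∀ q ∈ T, s.SOppSide q (σ q)) {p x : P} (hp : p ∈ s) (hx : x ∉ s)
    [DecidablePred (s.SSameSide x)] : 2 * (T.filter (s.SSameSide x)).card = T.card := by
  refine Finset.two_mul_card_filter_of_involution _ hmap hinv fun q hq => ?_
  rw [(hopp q hq).sSameSide_iff]
  exact ⟨SOppSide.not_sSameSide, (sSameSide_or_sOppSide_of_finrank_quotient_eq_one hs hp hx
    (hopp q hq).left_notMem).resolve_left⟩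

theorem filter_sSameSide_erase {s : AffineSubspace R P} {a x : P} (ha : a ∈ s) (T : Finset P)
    [DecidableEq P] [DecidablePred (s.SSameSide x)] :
    (T.erase a).filter (s.SSameSide x) = T.filter (s.SSameSide x) := by
  rw [Finset.filter_erase, Finset.erase_eq_of_notMem]
  simp only [Finset.mem_filter, not_and]
  exact fun _ h => h.right_notMem ha

theorem sOppSide_of_openSegment_inter_nonempty {a b x y : V} (hx : x ∉ line[R, a, b])
    (h : (openSegment R x y ∩ openSegment R a b).Nonempty) : line[R, a, b].SOppSide x y := by
  obtain ⟨z, hzxy, hzab⟩ := h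
  have hzL : z ∈ line[R, a, b] := by
    apply affineSegment_subset_affineSpan
    rw [affineSegment_eq_segment]
    exact openSegment_subset_segment R a b hzab
  have hxy : x ≠ y := by
    rintro rfl
    rw [openSegment_same, Set.mem_singleton_iff] at hzxy
    exact hx (hzxy ▸ hzL)
  rw [openSegment_eq_image_lineMap] at hzxy
  obtain ⟨t, ht, rfl⟩ := hzxy
  exact (sbtw_lineMap_iff.2 ⟨hxy, ht⟩).sOppSide_of_notMem_of_mem hx hzL

end AffineSubspace

theorem pairwise_crossing_halves_general (n : ℕ)
    (P : Finset Pt) (hcard : P.card = 2 * n)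
    (hgen : ∀ x ∈ P, ∀ y ∈ P, ∀ z ∈ P, x ≠ y → x ≠ z → y ≠ z →
      ¬ Collinear ℝ ({x, y, z} : Set Pt))
    (σ : Pt → Pt)
    (hmap : ∀ x ∈ P, σ x ∈ P)
    (hinv : ∀ x ∈ P, σ (σ x) = x)
    (hfpf : ∀ x ∈ P, σ x ≠ x)
    (hcross : ∀ x ∈ P, ∀ y ∈ P, ({x, σ x} : Set Pt) ≠ {y, σ y} →
      (openSegment ℝ x (σ x) ∩ openSegment ℝ y (σ y)).Nonempty) :
    ∀ a ∈ P, ∀ p : Pt, p ∉ affineSpan ℝ ({a, σ a} : Set Pt) →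
      {q ∈ (P : Set Pt) |
        (affineSpan ℝ ({a, σ a} : Set Pt)).SSameSide p q}.ncard = n - 1 := by
  intro a ha p hp
  set L := line[ℝ, a, σ a]
  classical
  have hab : a ≠ σ a := (hfpf a ha).symm
  have hopp : ∀ q ∈ (P.erase a).erase (σ a), L.SOppSide q (σ q) := fun q hq => by
    simp only [Finset.mem_erase] at hq
    obtain ⟨hqb, hqa, hqP⟩ := hq
    have hqL : q ∉ L := fun hqL => hgen q hqP a ha (σ a) (hmap a ha) hqa hqb hab
      (collinear_insert_of_mem_affineSpan_pair hqL)
    exact AffineSubspace.sOppSide_of_openSegment_inter_nonempty hqL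
      (hcross q hqP a ha (by simp [Set.pair_eq_pair_iff, hqa, hqb]))
  have hhalf := AffineSubspace.two_mul_card_filter_sSameSide
    (AffineSubspace.finrank_quotient_direction_affineSpan_pair finrank_euclideanSpace_fin hab)
    (fun q => Finset.apply_mem_erase_erase_of_involution hmap hinv ha)
    (fun q hq => hinv q (Finset.mem_of_mem_erase (Finset.mem_of_mem_erase hq))) hopp
    (left_mem_affineSpan_pair ℝ a (σ a)) hp
  have hTcard : ((P.erase a).erase (σ a)).card = 2 * n - 2 := by
    rw [Finset.card_erase_of_mem (Finset.mem_erase.2 ⟨hfpf a ha, hmap a ha⟩),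
      Finset.card_erase_of_mem ha, hcard]
    omega
  have hset : {q ∈ (P : Set Pt) | L.SSameSide p q} = P.filter (L.SSameSide p) :=
    (Finset.coe_filter _ _).symm
  rw [hset, Set.ncard_coe_finset,
    ← AffineSubspace.filter_sSameSide_erase (left_mem_affineSpan_pair ℝ a (σ a)) P,
    ← AffineSubspace.filter_sSameSide_erase (right_mem_affineSpan_pair ℝ a (σ a)) (P.erase a)]
  omega

theorem pairwise_crossing_halves (n : ℕ) (hn : 1 ≤ n)
    (P : Finset Pt) (hcard : P.card = 2 * n)
    (hgen : ∀ x ∈ P, ∀ y ∈ P, ∀ z ∈ P, x ≠ y → x ≠ z → y ≠ z →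
      ¬ Collinear ℝ ({x, y, z} : Set Pt))
    (σ : Pt → Pt)
    (hmap : ∀ x ∈ P, σ x ∈ P)
    (hinv : ∀ x ∈ P, σ (σ x) = x)
    (hfpf : ∀ x ∈ P, σ x ≠ x)
    (hcross : ∀ x ∈ P, ∀ y ∈ P, ({x, σ x} : Set Pt) ≠ {y, σ y} →
      (openSegment ℝ x (σ x) ∩ openSegment ℝ y (σ y)).Nonempty) :
    ∀ a ∈ P, ∀ p : Pt, p ∉ affineSpan ℝ ({a, σ a} : Set Pt) →
      {q ∈ (P : Set Pt) |
        (affineSpan ℝ ({a, σ a} : Set Pt)).SSameSide p q}.ncard = n - 1 :=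
  pairwise_crossing_halves_general n P hcard hgen σ hmap hinv hfpf hcross
end
end

section
/- Let P be a finite set of 2n points in ℝ² with no three points of P collinear. If σ₁ and σ₂ are both fixed-point-free involutions on P whose matchings are pairwise crossing (i.e., for σ ∈ {σ₁, σ₂}, any two distinct edges {x, σ(x)} and {y, σ(y)} cross), then σ₁ = σ₂. That is, a pairwise crossing perfect matching on a point set in general position is unique if it exists. -/
/-!
Every edge `{x, σ x}` of a pairwise crossing matching is a halving edge: `σ` exchanges the points
on the two sides of the line through `x` and `σ x`, since every other edge crosses it. Seen from
the lexicographically largest point `x`, all other points lie in an open half-plane, and the number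
of points to the left of the ray from `x` towards `y` strictly decreases as `y` turns
counterclockwise. So `x` has a unique halving partner, `σ₁ x = σ₂ x`; removing this common edge
and inducting gives `σ₁ = σ₂`.
-/
noncomputable section

open scoped Finset

lemma Pt.ext_coord {x y : Pt} (h₀ : x 0 = y 0) (h₁ : x 1 = y 1) : x = y := by
  ext i; fin_cases i <;> assumption

/-- Twice the signed area of the triangle `x y z`: positive iff `z` lies to the left of the
line from `x` to `y`. -/
def orient (x y z : Pt) : ℝ := (y 0 - x 0) * (z 1 - x 1) - (y 1 - x 1) * (z 0 - x 0)

@[simp] lemma orient_self_left (x y : Pt) : orient x y x = 0 := by unfold orient; ring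

@[simp] lemma orient_self_right (x y : Pt) : orient x y y = 0 := by unfold orient; ring

lemma orient_swap (x y z : Pt) : orient x z y = -orient x y z := by unfold orient; ring

lemma orient_smul_add_smul (x y p q : Pt) {a b : ℝ} (hab : a + b = 1) :
    orient x y (a • p + b • q) = a * orient x y p + b * orient x y q := by
  simp only [orient, PiLp.add_apply, PiLp.smul_apply, smul_eq_mul]
  linear_combination (x 1 * (y 0 - x 0) - x 0 * (y 1 - x 1)) * hab

lemma collinear_of_orient_eq_zero {x y z : Pt} (h : orient x y z = 0) (hxy : x ≠ y) :
    Collinear ℝ ({x, y, z} : Set Pt) := by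
  unfold orient at h
  have hd : (y 0 - x 0) ^ 2 + (y 1 - x 1) ^ 2 ≠ 0 := fun h₀ =>
    hxy (Pt.ext_coord (by nlinarith) (by nlinarith))
  -- the coefficient of the orthogonal projection of `z - x` onto `y - x`
  set t := ((z 0 - x 0) * (y 0 - x 0) + (z 1 - x 1) * (y 1 - x 1)) /
    ((y 0 - x 0) ^ 2 + (y 1 - x 1) ^ 2)
  have hz : z = t • (y -ᵥ x) +ᵥ x := by
    apply Pt.ext_coord <;>
      simp only [vsub_eq_sub, vadd_eq_add, PiLp.add_apply, PiLp.smul_apply, PiLp.sub_apply,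
        smul_eq_mul, t] <;>
      field_simp
    · linear_combination (x 1 - y 1) * h
    · linear_combination (y 0 - x 0) * h
  rw [Set.insert_comm, Set.pair_comm, Set.insert_comm, hz]
  exact collinear_insert_of_mem_affineSpan_pair (smul_vsub_rev_vadd_mem_affineSpan_pair _ _ _)

lemma orient_mul_neg_of_openSegment_inter {x y p q : Pt}
    (h : (openSegment ℝ x y ∩ openSegment ℝ p q).Nonempty) (hp : orient x y p ≠ 0) :
    orient x y p * orient x y q < 0 := by
  obtain ⟨w, ⟨a, b, -, -, hab, rfl⟩, ⟨c, d, hc, hd, hcd, hw⟩⟩ := h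
  have h₀ : c * orient x y p + d * orient x y q = 0 := by
    rw [← orient_smul_add_smul x y p q hcd, hw, orient_smul_add_smul x y x y hab]
    simp
  have h₁ : d * (orient x y p * orient x y q) = -(c * (orient x y p * orient x y p)) := by
    linear_combination orient x y p * h₀
  exact neg_of_mul_neg_right (h₁ ▸ neg_neg_of_pos (mul_pos hc (mul_self_pos.2 hp))) hd.le

def lexKey (p : Pt) : Lex (ℝ × ℝ) := toLex (p 0, p 1)

lemma lexKey_injective : Function.Injective lexKey := fun x y h => by
  simp only [lexKey, toLex_inj, Prod.mk.injEq] at h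
  exact Pt.ext_coord h.1 h.2

lemma exists_forall_lexKey_lt {P : Finset Pt} (hP : P.Nonempty) :
    ∃ x ∈ P, ∀ z ∈ P, z ≠ x → lexKey z < lexKey x := by
  obtain ⟨x, hx, hmax⟩ := P.exists_max_image lexKey hP
  exact ⟨x, hx, fun z hz hzx => (hmax z hz).lt_of_ne (lexKey_injective.ne hzx)⟩

lemma lexKey_lt_iff {p q : Pt} :
    lexKey p < lexKey q ↔ p 0 - q 0 < 0 ∨ p 0 - q 0 = 0 ∧ p 1 - q 1 < 0 := by
  simp only [lexKey, Prod.Lex.toLex_lt_toLex, sub_neg, sub_eq_zero]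

/-- Seen from a lexicographically maximal point `x`, all other points lie in a half-plane, where
`0 < orient x y y'` is a strict order on the directions `y - x`. -/
lemma orient_pos_trans {x y y' z : Pt} (hy : lexKey y < lexKey x) (hy' : lexKey y' < lexKey x)
    (hz : lexKey z < lexKey x) (h₁ : 0 < orient x y y') (h₂ : 0 < orient x y' z) :
    0 < orient x y z := by
  rw [lexKey_lt_iff] at hy hy' hz
  unfold orient at *
  generalize y 0 - x 0 = u₀, y 1 - x 1 = u₁, y' 0 - x 0 = v₀, y' 1 - x 1 = v₁,
    z 0 - x 0 = w₀, z 1 - x 1 = w₁ at *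
  rcases hy' with hv | ⟨rfl, hv⟩
  · have e₀ : (u₀ * w₁ - u₁ * w₀) * v₀ = (v₀ * w₁ - v₁ * w₀) * u₀ + (u₀ * v₁ - u₁ * v₀) * w₀ := by
      ring
    have e₁ : (u₀ * w₁ - u₁ * w₀) * v₁ = (v₀ * w₁ - v₁ * w₀) * u₁ + (u₀ * v₁ - u₁ * v₀) * w₁ := by
      ring
    rcases hy with hu | ⟨rfl, hu⟩ <;> rcases hz with hw | ⟨rfl, hw⟩
    · nlinarith [mul_neg_of_pos_of_neg h₂ hu, mul_neg_of_pos_of_neg h₁ hw]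
    · nlinarith [mul_neg_of_pos_of_neg h₂ hu]
    · nlinarith [mul_neg_of_pos_of_neg h₁ hw]
    · nlinarith
  · rcases hz with hw | ⟨rfl, hw⟩ <;> nlinarith

def InGeneralPosition (P : Finset Pt) : Prop :=
  ∀ x ∈ P, ∀ y ∈ P, ∀ z ∈ P, x ≠ y → x ≠ z → y ≠ z → ¬ Collinear ℝ ({x, y, z} : Set Pt)

lemma InGeneralPosition.mono {P Q : Finset Pt} (hP : InGeneralPosition P) (hQ : Q ⊆ P) :
    InGeneralPosition Q :=
  fun x hx y hy z hz => hP x (hQ hx) y (hQ hy) z (hQ hz)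

lemma InGeneralPosition.orient_ne_zero {P : Finset Pt} (hP : InGeneralPosition P) {x y z : Pt}
    (hx : x ∈ P) (hy : y ∈ P) (hz : z ∈ P) (hxy : x ≠ y) (hxz : x ≠ z) (hyz : y ≠ z) :
    orient x y z ≠ 0 :=
  fun h => hP x hx y hy z hz hxy hxz hyz (collinear_of_orient_eq_zero h hxy)

def leftSide (P : Finset Pt) (x y : Pt) : Finset Pt := P.filter (0 < orient x y ·)

def rightSide (P : Finset Pt) (x y : Pt) : Finset Pt := P.filter (orient x y · < 0)

lemma card_leftSide_add_card_rightSide {P : Finset Pt} (hP : InGeneralPosition P) {x y : Pt}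
    (hx : x ∈ P) (hy : y ∈ P) (hxy : x ≠ y) :
    #(leftSide P x y) + #(rightSide P x y) + 2 = #P := by
  set Q := (P.erase x).erase y
  have hQ : #Q + 2 = #P := by
    rw [← Finset.card_erase_add_one hx,
      ← Finset.card_erase_add_one (Finset.mem_erase.2 ⟨hxy.symm, hy⟩)]
  have hleft : leftSide P x y = Q.filter (0 < orient x y ·) := by
    ext z
    simp only [leftSide, Q, Finset.mem_filter, Finset.mem_erase]
    constructor
    · rintro ⟨hz, hpos⟩
      exact ⟨⟨by rintro rfl; simp at hpos, by rintro rfl; simp at hpos, hz⟩, hpos⟩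
    · rintro ⟨⟨-, -, hz⟩, hpos⟩
      exact ⟨hz, hpos⟩
  have hright : rightSide P x y = Q.filter (¬ 0 < orient x y ·) := by
    ext z
    simp only [rightSide, Q, Finset.mem_filter, Finset.mem_erase, not_lt]
    constructor
    · rintro ⟨hz, hneg⟩
      exact ⟨⟨by rintro rfl; simp at hneg, by rintro rfl; simp at hneg, hz⟩, hneg.le⟩
    · rintro ⟨⟨hzy, hzx, hz⟩, hnonpos⟩
      exact ⟨hz, hnonpos.lt_of_ne (hP.orient_ne_zero hx hy hz hxy (Ne.symm hzx) (Ne.symm hzy))⟩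
  rw [hleft, hright, Finset.card_filter_add_card_filter_not, hQ]

lemma leftSide_ssubset_leftSide {P : Finset Pt} {x y y' : Pt}
    (hmax : ∀ z ∈ P, z ≠ x → lexKey z < lexKey x) (hy : y ∈ P) (hyx : y ≠ x) (hy' : y' ∈ P)
    (hy'x : y' ≠ x) (hyy' : 0 < orient x y y') : leftSide P x y' ⊂ leftSide P x y := by
  refine Finset.ssubset_iff_of_subset (fun z hz => ?_) |>.2 ⟨y', ?_, by simp [leftSide]⟩
  · rw [leftSide, Finset.mem_filter] at hz ⊢
    have hzx : z ≠ x := by rintro rfl; simp at hz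
    exact ⟨hz.1, orient_pos_trans (hmax y hy hyx) (hmax y' hy' hy'x) (hmax z hz.1 hzx) hyy' hz.2⟩
  · exact Finset.mem_filter.2 ⟨hy', hyy'⟩

lemma eq_of_card_leftSide_eq {P : Finset Pt} (hP : InGeneralPosition P) {x y y' : Pt}
    (hx : x ∈ P) (hmax : ∀ z ∈ P, z ≠ x → lexKey z < lexKey x) (hy : y ∈ P) (hyx : y ≠ x)
    (hy' : y' ∈ P) (hy'x : y' ≠ x) (hcard : #(leftSide P x y) = #(leftSide P x y')) :
    y = y' := by
  by_contra hyy'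
  rcases (hP.orient_ne_zero hx hy hy' hyx.symm hy'x.symm hyy').lt_or_gt with hneg | hpos
  · rw [← neg_pos, ← orient_swap] at hneg
    exact (Finset.card_lt_card (leftSide_ssubset_leftSide hmax hy' hy'x hy hyx hneg)).ne hcard
  · exact (Finset.card_lt_card (leftSide_ssubset_leftSide hmax hy hyx hy' hy'x hpos)).ne' hcard

structure IsPairwiseCrossingMatching (P : Finset Pt) (σ : Pt → Pt) : Prop where
  mapsTo : ∀ x ∈ P, σ x ∈ P
  involutive : ∀ x ∈ P, σ (σ x) = x
  ne_self : ∀ x ∈ P, σ x ≠ x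
  crossing : ∀ x ∈ P, ∀ y ∈ P, ({x, σ x} : Set Pt) ≠ {y, σ y} →
    (openSegment ℝ x (σ x) ∩ openSegment ℝ y (σ y)).Nonempty

namespace IsPairwiseCrossingMatching

variable {P : Finset Pt} {σ : Pt → Pt}

lemma orient_mul_orient_apply_neg (h : IsPairwiseCrossingMatching P σ) {x z : Pt} (hx : x ∈ P)
    (hz : z ∈ P) (hxz : orient x (σ x) z ≠ 0) :
    orient x (σ x) z * orient x (σ x) (σ z) < 0 := by
  refine orient_mul_neg_of_openSegment_inter (h.crossing x hx z hz fun hedge => ?_) hxz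
  have : z ∈ ({x, σ x} : Set Pt) := hedge ▸ Set.mem_insert z _
  rcases this with rfl | rfl <;> simp at hxz

lemma card_leftSide_eq_card_rightSide (h : IsPairwiseCrossingMatching P σ) {x : Pt}
    (hx : x ∈ P) : #(leftSide P x (σ x)) = #(rightSide P x (σ x)) := by
  refine Finset.card_nbij' σ σ ?_ ?_ (fun z hz => ?_) (fun z hz => ?_)
  · intro z hz
    rw [Finset.mem_coe, leftSide, Finset.mem_filter] at hz
    rw [Finset.mem_coe, rightSide, Finset.mem_filter]
    have := h.orient_mul_orient_apply_neg hx hz.1 hz.2.ne'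
    exact ⟨h.mapsTo z hz.1, by nlinarith⟩
  · intro z hz
    rw [Finset.mem_coe, rightSide, Finset.mem_filter] at hz
    rw [Finset.mem_coe, leftSide, Finset.mem_filter]
    have := h.orient_mul_orient_apply_neg hx hz.1 hz.2.ne
    exact ⟨h.mapsTo z hz.1, by nlinarith⟩
  · exact h.involutive z (Finset.mem_filter.1 hz).1
  · exact h.involutive z (Finset.mem_filter.1 hz).1

lemma two_mul_card_leftSide_add_two (h : IsPairwiseCrossingMatching P σ)
    (hP : InGeneralPosition P) {x : Pt} (hx : x ∈ P) : 2 * #(leftSide P x (σ x)) + 2 = #P := by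
  have := card_leftSide_add_card_rightSide hP hx (h.mapsTo x hx) (h.ne_self x hx).symm
  rw [← h.card_leftSide_eq_card_rightSide hx] at this
  omega

lemma erase_erase (h : IsPairwiseCrossingMatching P σ) {x : Pt} (hx : x ∈ P) :
    IsPairwiseCrossingMatching ((P.erase x).erase (σ x)) σ := by
  have hsub : (P.erase x).erase (σ x) ⊆ P :=
    (Finset.erase_subset _ _).trans (Finset.erase_subset _ _)
  refine ⟨fun z hz => ?_, fun z hz => h.involutive z (hsub hz), fun z hz => h.ne_self z (hsub hz),
    fun z hz w hw => h.crossing z (hsub hz) w (hsub hw)⟩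
  simp only [Finset.mem_erase] at hz ⊢
  obtain ⟨hzσx, hzx, hz⟩ := hz
  refine ⟨fun he => hzx ?_, fun he => hzσx ?_, h.mapsTo z hz⟩
  · rw [← h.involutive z hz, he, h.involutive x hx]
  · rw [← h.involutive z hz, he]

lemma apply_eq_of_lexKey_max {σ₁ σ₂ : Pt → Pt} (hP : InGeneralPosition P)
    (h₁ : IsPairwiseCrossingMatching P σ₁) (h₂ : IsPairwiseCrossingMatching P σ₂) {x : Pt}
    (hx : x ∈ P) (hmax : ∀ z ∈ P, z ≠ x → lexKey z < lexKey x) : σ₁ x = σ₂ x := by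
  refine eq_of_card_leftSide_eq hP hx hmax (h₁.mapsTo x hx) (h₁.ne_self x hx) (h₂.mapsTo x hx)
    (h₂.ne_self x hx) ?_
  have hcard₁ := h₁.two_mul_card_leftSide_add_two hP hx
  have hcard₂ := h₂.two_mul_card_leftSide_add_two hP hx
  omega

theorem eqOn {σ₁ σ₂ : Pt → Pt} (hP : InGeneralPosition P)
    (h₁ : IsPairwiseCrossingMatching P σ₁) (h₂ : IsPairwiseCrossingMatching P σ₂) :
    Set.EqOn σ₁ σ₂ P := by
  induction P using Finset.strongInduction generalizing σ₁ σ₂ with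
  | H P ih =>
  rcases P.eq_empty_or_nonempty with rfl | hne
  · simp
  obtain ⟨x, hx, hmax⟩ := exists_forall_lexKey_lt hne
  have hσx : σ₁ x = σ₂ x := apply_eq_of_lexKey_max hP h₁ h₂ hx hmax
  have hQ : (P.erase x).erase (σ₁ x) ⊂ P :=
    (Finset.erase_subset _ _).trans_ssubset (Finset.erase_ssubset hx)
  have hQeq := ih _ hQ (hP.mono hQ.subset) (h₁.erase_erase hx) (hσx ▸ h₂.erase_erase hx)
  intro z hz
  by_cases hzx : z = x
  · rw [hzx, hσx]
  by_cases hzσx : z = σ₁ x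
  · rw [hzσx, h₁.involutive x hx, hσx, h₂.involutive x hx]
  exact hQeq (by simp [hzx, hzσx, Finset.mem_coe.1 hz])

end IsPairwiseCrossingMatching

theorem pairwise_crossing_unique_general
    (P : Finset Pt)
    (hgen : ∀ x ∈ P, ∀ y ∈ P, ∀ z ∈ P, x ≠ y → x ≠ z → y ≠ z →
      ¬ Collinear ℝ ({x, y, z} : Set Pt))
    (σ₁ σ₂ : Pt → Pt)
    (hmap₁ : ∀ x ∈ P, σ₁ x ∈ P) (hinv₁ : ∀ x ∈ P, σ₁ (σ₁ x) = x)
    (hfpf₁ : ∀ x ∈ P, σ₁ x ≠ x)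
    (hcross₁ : ∀ x ∈ P, ∀ y ∈ P, ({x, σ₁ x} : Set Pt) ≠ {y, σ₁ y} →
      (openSegment ℝ x (σ₁ x) ∩ openSegment ℝ y (σ₁ y)).Nonempty)
    (hmap₂ : ∀ x ∈ P, σ₂ x ∈ P) (hinv₂ : ∀ x ∈ P, σ₂ (σ₂ x) = x)
    (hfpf₂ : ∀ x ∈ P, σ₂ x ≠ x)
    (hcross₂ : ∀ x ∈ P, ∀ y ∈ P, ({x, σ₂ x} : Set Pt) ≠ {y, σ₂ y} →
      (openSegment ℝ x (σ₂ x) ∩ openSegment ℝ y (σ₂ y)).Nonempty) :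
    Set.EqOn σ₁ σ₂ (P : Set Pt) :=
  IsPairwiseCrossingMatching.eqOn hgen ⟨hmap₁, hinv₁, hfpf₁, hcross₁⟩ ⟨hmap₂, hinv₂, hfpf₂, hcross₂⟩

theorem pairwise_crossing_unique (n : ℕ)
    (P : Finset Pt) (hcard : P.card = 2 * n)
    (hgen : ∀ x ∈ P, ∀ y ∈ P, ∀ z ∈ P, x ≠ y → x ≠ z → y ≠ z →
      ¬ Collinear ℝ ({x, y, z} : Set Pt))
    (σ₁ σ₂ : Pt → Pt)
    (hmap₁ : ∀ x ∈ P, σ₁ x ∈ P) (hinv₁ : ∀ x ∈ P, σ₁ (σ₁ x) = x)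
    (hfpf₁ : ∀ x ∈ P, σ₁ x ≠ x)
    (hcross₁ : ∀ x ∈ P, ∀ y ∈ P, ({x, σ₁ x} : Set Pt) ≠ {y, σ₁ y} →
      (openSegment ℝ x (σ₁ x) ∩ openSegment ℝ y (σ₁ y)).Nonempty)
    (hmap₂ : ∀ x ∈ P, σ₂ x ∈ P) (hinv₂ : ∀ x ∈ P, σ₂ (σ₂ x) = x)
    (hfpf₂ : ∀ x ∈ P, σ₂ x ≠ x)
    (hcross₂ : ∀ x ∈ P, ∀ y ∈ P, ({x, σ₂ x} : Set Pt) ≠ {y, σ₂ y} →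
      (openSegment ℝ x (σ₂ x) ∩ openSegment ℝ y (σ₂ y)).Nonempty) :
    Set.EqOn σ₁ σ₂ (P : Set Pt) :=
  pairwise_crossing_unique_general P hgen σ₁ σ₂ hmap₁ hinv₁ hfpf₁ hcross₁ hmap₂ hinv₂ hfpf₂ hcross₂
end
end

section
/- Let n ≥ 1 and let a, b : Fin n → ℝ² be points such that the 2n points a₀,b₀,…,a_{n-1},b_{n-1} are pairwise distinct and no three of them are collinear. Suppose the matching M = {(aᵢ,bᵢ) : i ∈ Fin n} is pairwise crossing: for all i ≠ j, the open segments (aᵢ,bᵢ) and (aⱼ,bⱼ) have a common point. Then M is globally maximum: for every fixed-point-free involution τ on the set of the 2n endpoints, (1/2)·Σ_{x} dist(x, τ(x)) ≤ Σᵢ dist(aᵢ,bᵢ). -/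
/-
Project everything onto the line of direction `θ`. On a line, pairwise intersecting intervals
have a common point `t`, so the projected matching has length `∑ |xᵢ - t|` over all endpoints,
while by the triangle inequality through `t` every other perfect matching of the projected points
has length at most that. Averaging over `θ` turns projected lengths back into planar ones, since
`∫₀^{2π} |⟪v, (cos θ, sin θ)⟫| dθ = 4 ‖v‖` (Crofton's formula).
-/

open Finset

noncomputable section

open Real intervalIntegral MeasureTheory

lemma integral_abs_cos_sub (φ : ℝ) : ∫ θ in 0..2 * π, |cos (θ - φ)| = 4 := by
  have hper : Function.Periodic (fun θ => |cos θ|) π := fun θ => by simp [cos_add_pi]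
  have hint : ∀ s t, IntervalIntegrable (fun θ => |cos θ|) volume s t :=
    fun _ _ => continuous_cos.abs.intervalIntegrable _ _
  have half : ∫ θ in (-(π / 2))..(π / 2), |cos θ| = 2 := by
    rw [integral_congr (g := cos) fun θ hθ => abs_of_nonneg (cos_nonneg_of_mem_Icc ?_)]
    · rw [integral_cos, sin_pi_div_two, sin_neg]; norm_num
    · rwa [Set.uIcc_of_le (by linarith [pi_pos])] at hθ
  calc ∫ θ in 0..2 * π, |cos (θ - φ)|
      = ∫ θ in (-φ)..(-φ + (2 : ℤ) • π), |cos θ| := by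
        rw [integral_comp_sub_right (fun θ => |cos θ|), zero_sub, zsmul_eq_mul]
        congr 1
        push_cast
        ring
    _ = 2 * ∫ θ in (-(π / 2))..(-(π / 2) + π), |cos θ| := by
        rw [hper.intervalIntegral_add_zsmul_eq 2 _ hint, hper.intervalIntegral_add_eq (-φ) (-(π / 2))]
        simp
    _ = 4 := by rw [show -(π / 2) + π = π / 2 by ring, half]; norm_num

def proj (θ : ℝ) : Pt →L[ℝ] ℝ := cos θ • EuclideanSpace.proj 0 + sin θ • EuclideanSpace.proj 1

@[simp]
lemma proj_apply (θ : ℝ) (x : Pt) : proj θ x = cos θ * x 0 + sin θ * x 1 := rfl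

@[fun_prop]
lemma continuous_proj_apply (x : Pt) : Continuous fun θ => proj θ x := by
  simp only [proj_apply]; fun_prop

lemma integral_abs_proj (v : Pt) : ∫ θ in 0..2 * π, |proj θ v| = 4 * ‖v‖ := by
  set z : ℂ := Complex.orthonormalBasisOneI.repr.symm v
  have hz : ‖z‖ = ‖v‖ := LinearIsometryEquiv.norm_map _ v
  have hpolar : ∀ θ, proj θ v = ‖v‖ * cos (θ - Complex.arg z) := fun θ => by
    have h0 : v 0 = ‖z‖ * cos (Complex.arg z) := by rw [Complex.norm_mul_cos_arg]; simp [z]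
    have h1 : v 1 = ‖z‖ * sin (Complex.arg z) := by rw [Complex.norm_mul_sin_arg]; simp [z]
    rw [proj_apply, h0, h1, hz, cos_sub]; ring
  simp_rw [hpolar, abs_mul, abs_norm, intervalIntegral.integral_const_mul, integral_abs_cos_sub]
  ring

lemma dist_eq_integral_dist_proj (x y : Pt) :
    dist x y = (∫ θ in 0..2 * π, dist (proj θ x) (proj θ y)) / 4 := by
  simp_rw [Real.dist_eq, ← map_sub, integral_abs_proj, dist_eq_norm]
  ring

lemma sum_dist_eq_integral {ι : Type*} (s : Finset ι) (p q : ι → Pt) :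
    ∑ k ∈ s, dist (p k) (q k)
      = (∫ θ in 0..2 * π, ∑ k ∈ s, dist (proj θ (p k)) (proj θ (q k))) / 4 := by
  rw [integral_finsetSum fun k _ => Continuous.intervalIntegrable (by fun_prop) _ _, sum_div]
  exact sum_congr rfl fun k _ => dist_eq_integral_dist_proj (p k) (q k)

lemma proj_mem_uIcc_of_mem_openSegment (θ : ℝ) {x y q : Pt} (hq : q ∈ openSegment ℝ x y) :
    proj θ q ∈ Set.uIcc (proj θ x) (proj θ y) := by
  rw [← segment_eq_uIcc]
  obtain ⟨u, v, hu, hv, huv, rfl⟩ := hq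
  exact openSegment_subset_segment _ _ _ ⟨u, v, hu, hv, huv, by simp only [map_add, map_smul]⟩

lemma exists_forall_mem_uIcc_of_pairwise {ι : Type*} (s : Finset ι) (p q : ι → ℝ)
    (h : (s : Set ι).Pairwise fun i j =>
      (Set.uIcc (p i) (q i) ∩ Set.uIcc (p j) (q j)).Nonempty) :
    ∃ t, ∀ i ∈ s, t ∈ Set.uIcc (p i) (q i) := by
  rcases s.eq_empty_or_nonempty with rfl | hs
  · simp
  refine ⟨s.sup' hs fun i => min (p i) (q i),
    fun i hi => ⟨le_sup' (fun i => min (p i) (q i)) hi, sup'_le hs _ fun j hj => ?_⟩⟩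
  rcases eq_or_ne j i with rfl | hji
  · exact min_le_max
  · obtain ⟨r, hrj, hri⟩ := h hj hi hji
    exact hrj.1.trans hri.2

lemma sum_dist_comp_le {α M : Type*} [PseudoMetricSpace M] (s : Finset α) {τ : α → α}
    (hτs : ∀ x ∈ s, τ x ∈ s) (hτ : ∀ x ∈ s, τ (τ x) = x) (g : α → M) (c : M) :
    ∑ x ∈ s, dist (g x) (g (τ x)) ≤ 2 * ∑ x ∈ s, dist (g x) c := by
  have hreindex : ∑ x ∈ s, dist (g (τ x)) c = ∑ x ∈ s, dist (g x) c :=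
    sum_nbij' τ τ hτs hτs hτ hτ fun _ _ => rfl
  calc ∑ x ∈ s, dist (g x) (g (τ x))
      ≤ ∑ x ∈ s, (dist (g x) c + dist (g (τ x)) c) :=
        sum_le_sum fun x _ => dist_triangle_right _ _ _
    _ = 2 * ∑ x ∈ s, dist (g x) c := by rw [sum_add_distrib, hreindex]; ring

lemma sum_endpts {n : ℕ} {a b : Fin n → Pt} (hab : Function.Injective (Sum.elim a b))
    (f : Pt → ℝ) : ∑ x ∈ endpts a b, f x = ∑ i, (f (a i) + f (b i)) := by
  classical
  have : endpts a b = univ.image (Sum.elim a b) := by ext; simp [endpts, Sum.exists]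
  rw [this, sum_image fun _ _ _ _ h => hab h, Fintype.sum_sum_type, sum_add_distrib]
  rfl

lemma sum_dist_proj_le_of_pairwise_crossing {n : ℕ} {a b : Fin n → Pt}
    (hab : Function.Injective (Sum.elim a b))
    (hcross : ∀ i j : Fin n, i ≠ j →
      (openSegment ℝ (a i) (b i) ∩ openSegment ℝ (a j) (b j)).Nonempty)
    {τ : Pt → Pt} (hτs : ∀ x ∈ endpts a b, τ x ∈ endpts a b)
    (hτ : ∀ x ∈ endpts a b, τ (τ x) = x) (θ : ℝ) :
    ∑ x ∈ endpts a b, dist (proj θ x) (proj θ (τ x))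
      ≤ 2 * ∑ i, dist (proj θ (a i)) (proj θ (b i)) := by
  obtain ⟨t, ht⟩ := exists_forall_mem_uIcc_of_pairwise univ (fun i => proj θ (a i))
    (fun i => proj θ (b i)) fun i _ j _ hij =>
      let ⟨q, hqi, hqj⟩ := hcross i j hij
      ⟨proj θ q, proj_mem_uIcc_of_mem_openSegment θ hqi, proj_mem_uIcc_of_mem_openSegment θ hqj⟩
  calc ∑ x ∈ endpts a b, dist (proj θ x) (proj θ (τ x))
      ≤ 2 * ∑ x ∈ endpts a b, dist (proj θ x) t := sum_dist_comp_le _ hτs hτ _ t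
    _ = 2 * ∑ i, dist (proj θ (a i)) (proj θ (b i)) := by
        rw [sum_endpts hab]
        congr 1
        refine sum_congr rfl fun i _ => ?_
        rw [dist_comm (proj θ (b i)) t]
        exact dist_add_dist_of_mem_segment (segment_eq_uIcc (𝕜 := ℝ) _ _ ▸ ht i (mem_univ i))

theorem pairwise_crossing_globally_max_general (n : ℕ)
    (a b : Fin n → Pt)
    (hdist : Function.Injective (Sum.elim a b : Fin n ⊕ Fin n → Pt))
    (hcross : ∀ i j : Fin n, i ≠ j →
      (openSegment ℝ (a i) (b i) ∩ openSegment ℝ (a j) (b j)).Nonempty)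
    (τ : Pt → Pt) (hτ : IsFpfInvolOn (endpts a b) τ) :
    (1/2) * ∑ x ∈ endpts a b, dist x (τ x) ≤ ∑ i, dist (a i) (b i) := by
  rw [sum_dist_eq_integral (endpts a b) (fun x => x) τ, sum_dist_eq_integral univ a b]
  have hmono : ∫ θ in 0..2 * π, ∑ x ∈ endpts a b, dist (proj θ x) (proj θ (τ x))
      ≤ ∫ θ in 0..2 * π, 2 * ∑ i, dist (proj θ (a i)) (proj θ (b i)) :=
    integral_mono_on (by positivity) (Continuous.intervalIntegrable (by fun_prop) _ _)
      (Continuous.intervalIntegrable (by fun_prop) _ _) fun θ _ =>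
        sum_dist_proj_le_of_pairwise_crossing hdist hcross hτ.1 hτ.2.1 θ
  rw [intervalIntegral.integral_const_mul] at hmono
  linarith

theorem pairwise_crossing_globally_max (n : ℕ) (hn : 1 ≤ n)
    (a b : Fin n → Pt)
    (hdist : Function.Injective (Sum.elim a b : Fin n ⊕ Fin n → Pt))
    (hgen : ∀ i j k : Fin n ⊕ Fin n, i ≠ j → i ≠ k → j ≠ k →
      ¬ Collinear ℝ ({Sum.elim a b i, Sum.elim a b j, Sum.elim a b k} : Set Pt))
    (hcross : ∀ i j : Fin n, i ≠ j →
      (openSegment ℝ (a i) (b i) ∩ openSegment ℝ (a j) (b j)).Nonempty)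
    (τ : Pt → Pt) (hτ : IsFpfInvolOn (endpts a b) τ) :
    (1/2) * ∑ x ∈ endpts a b, dist x (τ x) ≤ ∑ i, dist (a i) (b i) :=
  pairwise_crossing_globally_max_general n a b hdist hcross τ hτ
end
end

section
/- There exist six pairwise distinct points A, B, C, D, E, F in ℝ² such that the perfect matching M₁ = {(A,B), (C,D), (E,F)} is 2-local maximum (every two of its edges form a maximum-length perfect matching on their 4 endpoints) and yet the perfect matching M₂ = {(A,F), (B,C), (D,E)} satisfies w(M₁) < 0.93 · w(M₂), where w denotes total edge length. In particular, μ₂ < 0.93: a 2-local maximum matching need not approximate a global maximum matching within ratio 0.93. -/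
/-!
The witnesses have integer coordinates, so every distance between two of them is the
square root of a natural number `n`, and it lies between `Nat.sqrt n` and `Nat.sqrt n + 1`.
Replacing each distance by the appropriate one of these two integer bounds still leaves a
margin in all seven inequalities (the smallest, about `7.7`, is in the ratio bound), so each
of them reduces to a comparison of integer square roots that `norm_num` evaluates.
-/

noncomputable section

lemma EuclideanSpace.dist_two_eq (a b c d : ℝ) :
    dist !₂[a, b] !₂[c, d] = √((a - c) ^ 2 + (b - d) ^ 2) := by
  simp [EuclideanSpace.dist_eq, Fin.sum_univ_two, Real.dist_eq, sq_abs]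

namespace Real

/- The numeral forms `OfNat.ofNat n` let these lemmas apply directly to goals such as
`√1949389 ≤ …`, where the radicand is a literal rather than a cast of a natural number. -/
section OfNat

variable {a b c d e f : ℕ} [a.AtLeastTwo] [b.AtLeastTwo] [c.AtLeastTwo] [d.AtLeastTwo]
  [e.AtLeastTwo] [f.AtLeastTwo]

lemma natSqrt_le_sqrt_ofNat : (Nat.sqrt a : ℝ) ≤ √(OfNat.ofNat a) :=
  Nat.cast_ofNat (R := ℝ) (n := a) ▸ nat_sqrt_le_real_sqrt

lemma sqrt_ofNat_le_natSqrt_add_one : √(OfNat.ofNat a : ℝ) ≤ Nat.sqrt a + 1 :=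
  Nat.cast_ofNat (R := ℝ) (n := a) ▸ real_sqrt_le_nat_sqrt_succ

lemma sqrt_add_sqrt_le_sqrt_add_sqrt_of_natSqrt
    (h : Nat.sqrt a + Nat.sqrt b + 2 ≤ Nat.sqrt c + Nat.sqrt d) :
    √(OfNat.ofNat a : ℝ) + √(OfNat.ofNat b) ≤ √(OfNat.ofNat c) + √(OfNat.ofNat d) := by
  have h' : (Nat.sqrt a + Nat.sqrt b + 2 : ℝ) ≤ Nat.sqrt c + Nat.sqrt d := by exact_mod_cast h
  linarith [sqrt_ofNat_le_natSqrt_add_one (a := a), sqrt_ofNat_le_natSqrt_add_one (a := b),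
    natSqrt_le_sqrt_ofNat (a := c), natSqrt_le_sqrt_ofNat (a := d)]

lemma sqrt_add_sqrt_add_sqrt_lt_mul_of_natSqrt {r : ℝ} (hr : 0 ≤ r)
    (h : (Nat.sqrt a + Nat.sqrt b + Nat.sqrt c + 3 : ℝ) <
      r * (Nat.sqrt d + Nat.sqrt e + Nat.sqrt f)) :
    √(OfNat.ofNat a : ℝ) + √(OfNat.ofNat b) + √(OfNat.ofNat c) <
      r * (√(OfNat.ofNat d) + √(OfNat.ofNat e) + √(OfNat.ofNat f)) := by
  have hlower : r * (Nat.sqrt d + Nat.sqrt e + Nat.sqrt f : ℝ) ≤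
      r * (√(OfNat.ofNat d) + √(OfNat.ofNat e) + √(OfNat.ofNat f)) := by
    gcongr <;> exact natSqrt_le_sqrt_ofNat
  linarith [sqrt_ofNat_le_natSqrt_add_one (a := a), sqrt_ofNat_le_natSqrt_add_one (a := b),
    sqrt_ofNat_le_natSqrt_add_one (a := c)]

end OfNat

end Real

theorem mu2_upper_bound : ∃ A B C D E F : Pt,
    ([A, B, C, D, E, F] : List Pt).Pairwise (· ≠ ·) ∧
    -- M₁ = {(A,B), (C,D), (E,F)} is 2-local maximum:
    (dist A C + dist B D ≤ dist A B + dist C D) ∧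
    (dist A D + dist C B ≤ dist A B + dist C D) ∧
    (dist A E + dist B F ≤ dist A B + dist E F) ∧
    (dist A F + dist E B ≤ dist A B + dist E F) ∧
    (dist C E + dist D F ≤ dist C D + dist E F) ∧
    (dist C F + dist E D ≤ dist C D + dist E F) ∧
    -- but M₂ = {(A,F), (B,C), (D,E)} is much longer:
    dist A B + dist C D + dist E F < 0.93 * (dist A F + dist B C + dist D E) := by
  refine ⟨!₂[64, 1133], !₂[323, -1080], !₂[-419, -177], !₂[-77, -246], !₂[-1709, -445],
    !₂[-408, -179], by norm_num [List.pairwise_cons], ?_⟩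
  norm_num only [EuclideanSpace.dist_two_eq]
  refine ⟨?_, ?_, ?_, ?_, ?_, ?_, ?_⟩
  iterate 6 exact Real.sqrt_add_sqrt_le_sqrt_add_sqrt_of_natSqrt (by norm_num)
  exact Real.sqrt_add_sqrt_add_sqrt_lt_mul_of_natSqrt (by norm_num) (by norm_num)
end
end

section
/- There exist eight pairwise distinct points A, B, C, D, E, F, G, H in ℝ² such that the perfect matching M₁ = {(A,B), (C,D), (E,F), (G,H)} is 3-local maximum (every three of its edges form a maximum-length perfect matching on their 6 endpoints) and yet the perfect matching M₂ = {(A,H), (B,C), (D,E), (F,G)} satisfies w(M₁) < 0.98 · w(M₂), where w denotes total edge length. In particular, μ₃ < 0.98: a 3-local maximum matching need not approximate a global maximum matching within ratio 0.98. -/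
open Finset

noncomputable section

/-!
Weak LP duality for matchings: if a potential `y` on a finite point set satisfies
`dist x z ≤ y x + y z` for all distinct `x`, `z`, then every perfect matching on the set has length
at most `∑ y`. For three edges `(aᵢ, bᵢ)` of `M₁` take `y aᵢ = tᵢ` and `y bᵢ = dist aᵢ bᵢ - tᵢ`:
then `∑ y` is the length of the three edges, and 3-local maximality reduces to finitely many
linear inequalities in the `tᵢ`. For the explicit eight integer points, integer potentials
satisfy them for each of the four triples with enough slack that distances rounded down to
integers suffice to verify them; the same rounding shows `w(M₁) < 0.98 · w(M₂)`.
-/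

namespace IsFpfInvolOn

variable {S : Finset Pt} {σ : Pt → Pt}

theorem sum_comp_eq (hσ : IsFpfInvolOn S σ) (f : Pt → ℝ) :
    ∑ x ∈ S, f (σ x) = ∑ x ∈ S, f x :=
  Finset.sum_nbij' σ σ hσ.1 hσ.1 hσ.2.1 hσ.2.1 fun _ _ => rfl

theorem half_sum_dist_le (hσ : IsFpfInvolOn S σ) (y : Pt → ℝ)
    (hy : ∀ x ∈ S, ∀ z ∈ S, x ≠ z → dist x z ≤ y x + y z) :
    (1/2) * ∑ x ∈ S, dist x (σ x) ≤ ∑ x ∈ S, y x := by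
  have hle : ∑ x ∈ S, dist x (σ x) ≤ ∑ x ∈ S, (y x + y (σ x)) :=
    Finset.sum_le_sum fun x hx => hy x hx (σ x) (hσ.1 x hx) (hσ.2.2 x hx).symm
  rw [Finset.sum_add_distrib, hσ.sum_comp_eq y] at hle
  linarith

end IsFpfInvolOn

/-- The bound on `dist (b p) (a q)` is the second condition for `(q, p)`. -/
def PotentialsDominate {n : ℕ} (a b : Fin n → Pt) (p q : Fin n) (tp tq : ℝ) : Prop :=
  dist (a p) (a q) ≤ tp + tq ∧
  dist (a p) (b q) ≤ tp + (dist (a q) (b q) - tq) ∧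
  dist (b p) (b q) ≤ (dist (a p) (b p) - tp) + (dist (a q) (b q) - tq)

section EdgePotential

variable {k : ℕ} (a b : Fin k → Pt) (t : Fin k → ℝ)

def edgePotential : Fin k ⊕ Fin k → ℝ :=
  Sum.elim t fun i => dist (a i) (b i) - t i

theorem dist_le_edgePotential (ht : ∀ i j, i ≠ j → PotentialsDominate a b i j (t i) (t j))
    {c c' : Fin k ⊕ Fin k} (hc : c ≠ c') :
    dist (Sum.elim a b c) (Sum.elim a b c') ≤ edgePotential a b t c + edgePotential a b t c' := by
  rcases c with i | i <;> rcases c' with j | j <;>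
    simp only [Sum.elim_inl, Sum.elim_inr, edgePotential]
  · exact (ht i j fun h => hc (h ▸ rfl)).1
  · obtain rfl | hij := eq_or_ne i j
    · linarith
    · exact (ht i j hij).2.1
  · obtain rfl | hij := eq_or_ne i j
    · rw [dist_comm]; linarith
    · rw [dist_comm]; linarith [(ht j i hij.symm).2.1]
  · exact (ht i j fun h => hc (h ▸ rfl)).2.2

theorem sum_edgePotential : ∑ c, edgePotential a b t c = ∑ i, dist (a i) (b i) := by
  simp [edgePotential, Fintype.sum_sum_type]

end EdgePotential

theorem isKLocalMax_of_potentialsDominate {k n : ℕ} {a b : Fin n → Pt}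
    (hab : Function.Injective (Sum.elim a b))
    (h : ∀ s : Fin k → Fin n, Function.Injective s → ∃ t : Fin k → ℝ,
      ∀ i j, i ≠ j → PotentialsDominate a b (s i) (s j) (t i) (t j)) :
    IsKLocalMax k a b := by
  intro s hs σ hσ
  obtain ⟨t, ht⟩ := h s hs
  set e := Sum.elim (a ∘ s) (b ∘ s)
  have he : Function.Injective e := by
    rw [show e = Sum.elim a b ∘ Sum.map s s by ext c; cases c <;> rfl]
    exact hab.comp (Sum.map_injective.2 ⟨hs, hs⟩)
  set y := Function.extend e (edgePotential (a ∘ s) (b ∘ s) t) 0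
  have hy : ∀ c, y (e c) = edgePotential (a ∘ s) (b ∘ s) t c := he.extend_apply _ _
  have hS : endpts (a ∘ s) (b ∘ s) = univ.image e := by
    ext x; simp [endpts, e, Sum.exists]
  calc (1/2) * ∑ x ∈ endpts (a ∘ s) (b ∘ s), dist x (σ x)
      ≤ ∑ x ∈ endpts (a ∘ s) (b ∘ s), y x := by
        refine hσ.half_sum_dist_le y ?_
        simp only [hS, mem_image, mem_univ, true_and]
        rintro _ ⟨c, rfl⟩ _ ⟨c', rfl⟩ hne
        rw [hy, hy]
        exact dist_le_edgePotential _ _ t ht (ne_of_apply_ne e hne)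
    _ = ∑ j, dist (a (s j)) (b (s j)) := by
        rw [hS, sum_image he.injOn]
        simp only [hy]
        exact sum_edgePotential _ _ t

section IntegerPoints

def toPt (p : ℤ × ℤ) : Pt := !₂[p.1, p.2]

theorem toPt_injective : Function.Injective toPt := by
  intro p q h
  have h0 := congrArg (· 0) h
  have h1 := congrArg (· 1) h
  simp [toPt] at h0 h1
  exact Prod.ext h0 h1

def sqDist (p q : ℤ × ℤ) : ℕ := (p.1 - q.1).natAbs ^ 2 + (p.2 - q.2).natAbs ^ 2

theorem dist_toPt (p q : ℤ × ℤ) : dist (toPt p) (toPt q) = √(sqDist p q) := by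
  simp [EuclideanSpace.dist_eq, toPt, sqDist, Fin.sum_univ_two, Real.dist_eq, sq_abs]

def floorDist (p q : ℤ × ℤ) : ℕ := Nat.sqrt (sqDist p q)

theorem floorDist_le_dist (p q : ℤ × ℤ) : (floorDist p q : ℝ) ≤ dist (toPt p) (toPt q) := by
  rw [dist_toPt]; exact Real.nat_sqrt_le_real_sqrt

theorem dist_lt_floorDist_add_one (p q : ℤ × ℤ) :
    dist (toPt p) (toPt q) < floorDist p q + 1 := by
  rw [dist_toPt]; exact Real.real_sqrt_lt_nat_sqrt_succ

theorem potentialsDominate_of_floorDist {n : ℕ} {a b : Fin n → ℤ × ℤ} {p q : Fin n} {tp tq : ℕ}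
    (haa : floorDist (a p) (a q) + 1 ≤ tp + tq)
    (hab : floorDist (a p) (b q) + 1 + tq ≤ tp + floorDist (a q) (b q))
    (hbb : floorDist (b p) (b q) + 1 + tp + tq ≤ floorDist (a p) (b p) + floorDist (a q) (b q)) :
    PotentialsDominate (toPt ∘ a) (toPt ∘ b) p q tp tq := by
  have haa' : (floorDist (a p) (a q) + 1 : ℝ) ≤ tp + tq := by exact_mod_cast haa
  have hab' : (floorDist (a p) (b q) + 1 + tq : ℝ) ≤ tp + floorDist (a q) (b q) := by
    exact_mod_cast hab
  have hbb' : (floorDist (b p) (b q) + 1 + tp + tq : ℝ) ≤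
      floorDist (a p) (b p) + floorDist (a q) (b q) := by
    exact_mod_cast hbb
  refine ⟨?_, ?_, ?_⟩ <;> simp only [Function.comp_apply]
  · linarith [dist_lt_floorDist_add_one (a p) (a q)]
  · linarith [dist_lt_floorDist_add_one (a p) (b q), floorDist_le_dist (a q) (b q)]
  · linarith [dist_lt_floorDist_add_one (b p) (b q), floorDist_le_dist (a p) (b p),
      floorDist_le_dist (a q) (b q)]

end IntegerPoints

section Example

def edgeStart : Fin 4 → ℤ × ℤ := ![(220, -550), (440, -820), (1170, -360), (320, -260)]

def edgeEnd : Fin 4 → ℤ × ℤ := ![(-140, 1150), (-340, 260), (-1080, -2610), (2060, -100)]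

/-- Row `m` holds the potentials `tᵢ` for the triple of edges other than `m`. -/
def potential : Fin 4 → Fin 4 → ℕ :=
  ![![0, 320, 630, 270], ![380, 0, 650, 220], ![240, 560, 0, 80], ![130, 460, 860, 0]]

theorem potential_certificate (m p q : Fin 4) (hp : p ≠ m) (hq : q ≠ m) (hpq : p ≠ q) :
    floorDist (edgeStart p) (edgeStart q) + 1 ≤ potential m p + potential m q ∧
    floorDist (edgeStart p) (edgeEnd q) + 1 + potential m q ≤
      potential m p + floorDist (edgeStart q) (edgeEnd q) ∧
    floorDist (edgeEnd p) (edgeEnd q) + 1 + potential m p + potential m q ≤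
      floorDist (edgeStart p) (edgeEnd p) + floorDist (edgeStart q) (edgeEnd q) := by
  fin_cases m <;> fin_cases p <;> fin_cases q <;>
    first
    | exact absurd rfl hp
    | exact absurd rfl hq
    | exact absurd rfl hpq
    | norm_num [floorDist, sqDist, edgeStart, edgeEnd, potential]

theorem sum_elim_edges_injective : Function.Injective (Sum.elim edgeStart edgeEnd) := by
  decide

theorem isKLocalMax_three_edges : IsKLocalMax 3 (toPt ∘ edgeStart) (toPt ∘ edgeEnd) := by
  refine isKLocalMax_of_potentialsDominate ?_ fun s hs => ?_
  · rw [← Sum.comp_elim]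
    exact toPt_injective.comp sum_elim_edges_injective
  obtain ⟨m, hm⟩ : ∃ m, m ∉ Set.range s := by
    by_contra! hsurj
    have := Fintype.card_le_of_surjective s fun m => hsurj m
    simp at this
  refine ⟨fun i => potential m (s i), fun i j hij => ?_⟩
  obtain ⟨haa, hab, hbb⟩ := potential_certificate m (s i) (s j)
    (fun h => hm ⟨i, h⟩) (fun h => hm ⟨j, h⟩) (hs.ne hij)
  exact potentialsDominate_of_floorDist haa hab hbb

theorem sum_dist_lt_shifted :
    ∑ i, dist (toPt (edgeStart i)) (toPt (edgeEnd i)) <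
      0.98 * ∑ i, dist (toPt (edgeEnd i)) (toPt (edgeStart (i + 1))) := by
  have hfloor : ∑ i : Fin 4, ((floorDist (edgeStart i) (edgeEnd i) : ℝ) + 1) ≤
      0.98 * ∑ i : Fin 4, (floorDist (edgeEnd i) (edgeStart (i + 1)) : ℝ) := by
    simp only [Fin.sum_univ_four, Fin.reduceAdd]
    norm_num [floorDist, sqDist, edgeStart, edgeEnd, Matrix.cons_val_two, Matrix.cons_val_three]
  calc ∑ i, dist (toPt (edgeStart i)) (toPt (edgeEnd i))
      < ∑ i : Fin 4, ((floorDist (edgeStart i) (edgeEnd i) : ℝ) + 1) :=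
        Finset.sum_lt_sum_of_nonempty univ_nonempty fun i _ => dist_lt_floorDist_add_one _ _
    _ ≤ 0.98 * ∑ i : Fin 4, (floorDist (edgeEnd i) (edgeStart (i + 1)) : ℝ) := hfloor
    _ ≤ 0.98 * ∑ i, dist (toPt (edgeEnd i)) (toPt (edgeStart (i + 1))) := by
        gcongr with i; exact floorDist_le_dist _ _

end Example

theorem mu3_upper_bound : ∃ A B C D E F G H : Pt,
    ([A, B, C, D, E, F, G, H] : List Pt).Pairwise (· ≠ ·) ∧
    -- M₁ = {(A,B), (C,D), (E,F), (G,H)} is 3-local maximum: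
    IsKLocalMax 3 ![A, C, E, G] ![B, D, F, H] ∧
    -- but M₂ = {(A,H), (B,C), (D,E), (F,G)} is much longer:
    dist A B + dist C D + dist E F + dist G H
      < 0.98 * (dist A H + dist B C + dist D E + dist F G) := by
  refine ⟨toPt (edgeStart 0), toPt (edgeEnd 0), toPt (edgeStart 1), toPt (edgeEnd 1),
    toPt (edgeStart 2), toPt (edgeEnd 2), toPt (edgeStart 3), toPt (edgeEnd 3), ?_, ?_, ?_⟩
  · exact List.Pairwise.map toPt (fun _ _ => toPt_injective.ne) (l := [edgeStart 0, edgeEnd 0,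
      edgeStart 1, edgeEnd 1, edgeStart 2, edgeEnd 2, edgeStart 3, edgeEnd 3]) (by decide)
  · convert isKLocalMax_three_edges using 1 <;> ext1 i <;> fin_cases i <;> rfl
  · have h := sum_dist_lt_shifted
    simp only [Fin.sum_univ_four, Fin.reduceAdd] at h
    linarith [dist_comm (toPt (edgeStart 0)) (toPt (edgeEnd 3))]
end
end
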